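/- Let α_1, β_1, α_2, β_2 > 0, let g(α_1,β_1,α_2,β_2) = ∫_0^1 f(x;α_1,β_1) I_x(α_2,β_2) dx and h(α_1,β_1,α_2,β_2) = B(α_1+α_2, β_1+β_2)/(B(α_1,β_1) B(α_2,β_2)). Then g(α_1, β_1, α_2, β_2+1) = g(α_1,β_1,α_2,β_2) + h(α_1,β_1,α_2,β_2)/β_2. -/

import Mathlib

open MeasureTheory Real Set

/-- The Beta function `B(a,b) = ∫₀¹ t^(a-1) (1-t)^(b-1) dt`. -/
noncomputable def betaFn (a b : ℝ) : ℝ :=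
  ∫ t in (0:ℝ)..1, t ^ (a - 1) * (1 - t) ^ (b - 1)

/-- The Beta(a,b) probability density on `[0,1]`. -/
noncomputable def betaPdf (a b : ℝ) (x : ℝ) : ℝ :=
  x ^ (a - 1) * (1 - x) ^ (b - 1) / betaFn a b

/-- The cumulative distribution function of Beta(a,b). -/
noncomputable def betaCdf (a b : ℝ) (x : ℝ) : ℝ :=
  (∫ t in (0:ℝ)..x, t ^ (a - 1) * (1 - t) ^ (b - 1)) / betaFn a b

/-- `g(α₁,β₁,α₂,β₂)`: the probability that an independent Beta(α₁,β₁) sample exceeds an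
independent Beta(α₂,β₂) sample. -/
noncomputable def probG (a₁ b₁ a₂ b₂ : ℝ) : ℝ :=
  ∫ x in (0:ℝ)..1, betaPdf a₁ b₁ x * betaCdf a₂ b₂ x

/-- `h(α₁,β₁,α₂,β₂) = B(α₁+α₂,β₁+β₂)/(B(α₁,β₁) B(α₂,β₂))`. -/
noncomputable def probH (a₁ b₁ a₂ b₂ : ℝ) : ℝ :=
  betaFn (a₁ + a₂) (b₁ + b₂) / (betaFn a₁ b₁ * betaFn a₂ b₂)

/-!
Integrating `d/dt [t^a (1-t)^b] = (a+b) t^(a-1) (1-t)^b - b t^(a-1) (1-t)^(b-1)` over `[0, x]`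
gives `(a+b) B_x(a, b+1) = x^a (1-x)^b + b B_x(a, b)` for the incomplete Beta function `B_x`.
At `x = 1` this is `(a+b) B(a, b+1) = b B(a, b)`, and dividing the two yields
`I_x(a, b+1) = I_x(a, b) + x^a (1-x)^b / (b B(a, b))`. Integrated against the Beta(a₁, b₁)
density, the extra term merges the powers of `x` and `1 - x` into `B(a₁+a₂, b₁+b₂)`.
-/

noncomputable def incompleteBeta (a b x : ℝ) : ℝ :=
  ∫ t in (0:ℝ)..x, t ^ (a - 1) * (1 - t) ^ (b - 1)

lemma betaCdf_eq_incompleteBeta_div (a b x : ℝ) :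
    betaCdf a b x = incompleteBeta a b x / betaFn a b := rfl

lemma intervalIntegrable_rpow_mul_one_sub_rpow_zero_half {p : ℝ} (hp : -1 < p) (q : ℝ) :
    IntervalIntegrable (fun t : ℝ => t ^ p * (1 - t) ^ q) volume 0 (1 / 2) := by
  refine (intervalIntegral.intervalIntegrable_rpow' hp).mul_continuousOn
    (ContinuousOn.rpow_const (f := fun t => 1 - t) (by fun_prop) fun t ht => Or.inl ?_)
  rw [uIcc_of_le (by norm_num)] at ht
  linarith [ht.2]

lemma intervalIntegrable_rpow_mul_one_sub_rpow {p q : ℝ} (hp : -1 < p) (hq : -1 < q) :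
    IntervalIntegrable (fun t : ℝ => t ^ p * (1 - t) ^ q) volume 0 1 := by
  have hright : IntervalIntegrable (fun t : ℝ => t ^ p * (1 - t) ^ q) volume (1 / 2) 1 := by
    have h := (intervalIntegrable_rpow_mul_one_sub_rpow_zero_half hq p).comp_sub_left 1
    norm_num [mul_comm] at h
    exact h.symm
  exact (intervalIntegrable_rpow_mul_one_sub_rpow_zero_half hp q).trans hright

lemma intervalIntegrable_betaIntegrand {a b x : ℝ} (ha : 0 < a) (hb : 0 < b) (hx : x ∈ Icc 0 1) :
    IntervalIntegrable (fun t : ℝ => t ^ (a - 1) * (1 - t) ^ (b - 1)) volume 0 x :=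
  (intervalIntegrable_rpow_mul_one_sub_rpow (by linarith) (by linarith)).mono_set <| by
    rw [uIcc_of_le hx.1, uIcc_of_le zero_le_one]
    exact Icc_subset_Icc_right hx.2

lemma betaFn_pos {a b : ℝ} (ha : 0 < a) (hb : 0 < b) : 0 < betaFn a b :=
  intervalIntegral.intervalIntegral_pos_of_pos_on
    (intervalIntegrable_betaIntegrand ha hb (right_mem_Icc.2 zero_le_one))
    (fun t ht => mul_pos (rpow_pos_of_pos ht.1 _) (rpow_pos_of_pos (by linarith [ht.2]) _))
    zero_lt_one

lemma continuous_rpow_mul_one_sub_rpow {a b : ℝ} (ha : 0 ≤ a) (hb : 0 ≤ b) :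
    Continuous (fun t : ℝ => t ^ a * (1 - t) ^ b) :=
  (continuous_rpow_const ha).mul (Continuous.rpow_const (by fun_prop) fun _ => Or.inr hb)

lemma hasDerivAt_rpow_mul_one_sub_rpow {a b t : ℝ} (ht : t ∈ Ioo 0 1) :
    HasDerivAt (fun t : ℝ => t ^ a * (1 - t) ^ b)
      ((a + b) * (t ^ (a - 1) * (1 - t) ^ b) - b * (t ^ (a - 1) * (1 - t) ^ (b - 1))) t := by
  have ht0 : t ≠ 0 := ht.1.ne'
  have ht1 : 1 - t ≠ 0 := by linarith [ht.2]
  refine ((hasDerivAt_rpow_const (p := a) (Or.inl ht0)).mul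
    (((hasDerivAt_id' t).const_sub 1).rpow_const (p := b) (Or.inl ht1))).congr_deriv ?_
  rw [rpow_sub_one ht0, rpow_sub_one ht1]
  field_simp
  ring

lemma incompleteBeta_succ {a b x : ℝ} (ha : 0 < a) (hb : 0 < b) (hx : x ∈ Icc 0 1) :
    (a + b) * incompleteBeta a (b + 1) x = x ^ a * (1 - x) ^ b + b * incompleteBeta a b x := by
  have hint₁ : IntervalIntegrable (fun t : ℝ => t ^ (a - 1) * (1 - t) ^ b) volume 0 x := by
    simpa using intervalIntegrable_betaIntegrand ha (by linarith : 0 < b + 1) hx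
  have hint₂ := intervalIntegrable_betaIntegrand ha hb hx
  have hftc := intervalIntegral.integral_eq_sub_of_hasDerivAt_of_le hx.1
    (continuous_rpow_mul_one_sub_rpow ha.le hb.le).continuousOn
    (fun t ht => hasDerivAt_rpow_mul_one_sub_rpow ⟨ht.1, ht.2.trans_le hx.2⟩)
    ((hint₁.const_mul (a + b)).sub (hint₂.const_mul b))
  rw [intervalIntegral.integral_sub (hint₁.const_mul _) (hint₂.const_mul _),
    intervalIntegral.integral_const_mul, intervalIntegral.integral_const_mul,
    zero_rpow ha.ne', zero_mul, sub_zero] at hftc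
  rw [incompleteBeta, incompleteBeta, add_sub_cancel_right]
  linarith

lemma betaFn_succ {a b : ℝ} (ha : 0 < a) (hb : 0 < b) :
    (a + b) * betaFn a (b + 1) = b * betaFn a b := by
  have h := incompleteBeta_succ ha hb (right_mem_Icc.2 zero_le_one)
  rwa [sub_self, zero_rpow hb.ne', mul_zero, zero_add] at h

lemma betaCdf_succ {a b x : ℝ} (ha : 0 < a) (hb : 0 < b) (hx : x ∈ Icc 0 1) :
    betaCdf a (b + 1) x = betaCdf a b x + x ^ a * (1 - x) ^ b / (b * betaFn a b) := by
  have hB := (betaFn_pos ha hb).ne'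
  have hab : a + b ≠ 0 := by linarith
  have hcdf : incompleteBeta a (b + 1) x =
      (x ^ a * (1 - x) ^ b + b * incompleteBeta a b x) / (a + b) := by
    rw [← incompleteBeta_succ ha hb hx]
    field_simp
  have hB' : betaFn a (b + 1) = b * betaFn a b / (a + b) := by
    rw [← betaFn_succ ha hb]
    field_simp
  rw [betaCdf_eq_incompleteBeta_div, betaCdf_eq_incompleteBeta_div, hcdf, hB']
  field_simp
  ring

lemma continuousOn_betaCdf {a b : ℝ} (ha : 0 < a) (hb : 0 < b) :
    ContinuousOn (betaCdf a b) (uIcc 0 1) :=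
  (intervalIntegral.continuousOn_primitive_interval'
    (intervalIntegrable_betaIntegrand ha hb (right_mem_Icc.2 zero_le_one))
    left_mem_uIcc).div_const _

lemma intervalIntegrable_betaPdf_mul {a b : ℝ} (ha : 0 < a) (hb : 0 < b) {f : ℝ → ℝ}
    (hf : ContinuousOn f (uIcc 0 1)) :
    IntervalIntegrable (fun x => betaPdf a b x * f x) volume 0 1 :=
  ((intervalIntegrable_betaIntegrand ha hb (right_mem_Icc.2 zero_le_one)).div_const _).mul_continuousOn
    hf

lemma integral_betaPdf_mul_rpow_mul_one_sub_rpow (a b c d : ℝ) :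
    ∫ x in (0:ℝ)..1, betaPdf a b x * (x ^ c * (1 - x) ^ d) =
      betaFn (a + c) (b + d) / betaFn a b := by
  rw [betaFn, ← intervalIntegral.integral_div]
  refine intervalIntegral.integral_congr_Ioo_of_le zero_le_one fun x hx => ?_
  have hx1 : 0 < 1 - x := by linarith [hx.2]
  rw [betaPdf, show a + c - 1 = a - 1 + c by ring, show b + d - 1 = b - 1 + d by ring,
    rpow_add hx.1, rpow_add hx1]
  ring

/-- Recurrence: incrementing β₂ by one. -/
theorem probG_beta2_succ (a₁ b₁ a₂ b₂ : ℝ)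
    (hα₁ : 0 < a₁) (hβ₁ : 0 < b₁) (hα₂ : 0 < a₂) (hβ₂ : 0 < b₂) :
    probG a₁ b₁ a₂ (b₂ + 1) = probG a₁ b₁ a₂ b₂ + probH a₁ b₁ a₂ b₂ / b₂ := by
  have hsplit : probG a₁ b₁ a₂ (b₂ + 1) = ∫ x in (0:ℝ)..1, (betaPdf a₁ b₁ x * betaCdf a₂ b₂ x +
      betaPdf a₁ b₁ x * (x ^ a₂ * (1 - x) ^ b₂) / (b₂ * betaFn a₂ b₂)) := by
    refine intervalIntegral.integral_congr fun x hx => ?_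
    rw [uIcc_of_le zero_le_one] at hx
    simp only [betaCdf_succ hα₂ hβ₂ hx, mul_add, mul_div_assoc]
  rw [hsplit, intervalIntegral.integral_add
      (intervalIntegrable_betaPdf_mul hα₁ hβ₁ (continuousOn_betaCdf hα₂ hβ₂))
      ((intervalIntegrable_betaPdf_mul hα₁ hβ₁
        (continuous_rpow_mul_one_sub_rpow hα₂.le hβ₂.le).continuousOn).div_const _),
    intervalIntegral.integral_div, integral_betaPdf_mul_rpow_mul_one_sub_rpow, probG, probH]
  field_simp
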